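/- arXiv:2405.02990 — 11 statements merged into one kernel-verified Lean document; each statement's English description precedes it below -/
import Mathlib

section
/- In a frame L, for any elements a, b, the Heyting implication of principal filters in the frame of filters satisfies ↑a → ↑b = {x ∈ L : b ≤ x ∨ a}. -/
/-! For an upper set `G`, the condition `↑a ∩ G ⊆ ↑b` says exactly that `b ≤ g ⊔ a` for all
`g ∈ G`: the element `g ⊔ a` lies in `↑a ∩ G`, and `x ⊔ a = x` for `x ∈ ↑a`. Distributivity makes
`{x | b ≤ x ⊔ a}` closed under meets, so it is itself a filter, hence the largest such one. -/

/-- A filter of a frame: contains ⊤, upward closed, closed under binary meets. -/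
def IsFrameFilter {L : Type*} [Order.Frame L] (F : Set L) : Prop :=
  ⊤ ∈ F ∧ (∀ x ∈ F, ∀ y : L, x ≤ y → y ∈ F) ∧ ∀ x ∈ F, ∀ y ∈ F, x ⊓ y ∈ F

theorem IsFrameFilter.isUpperSet {L : Type*} [Order.Frame L] {F : Set L} (hF : IsFrameFilter F) :
    IsUpperSet F :=
  fun x y hxy hx => hF.2.1 x hx y hxy

theorem isFrameFilter_setOf_le_sup {L : Type*} [Order.Frame L] (a b : L) :
    IsFrameFilter {x : L | b ≤ x ⊔ a} := by
  refine ⟨by simp, fun x hx y hxy => hx.trans (sup_le_sup_right hxy a), fun x hx y hy => ?_⟩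
  change b ≤ x ⊓ y ⊔ a
  rw [sup_inf_right]
  exact le_inf hx hy

theorem Set.Ici_inter_subset_Ici_iff_subset_setOf_le_sup {L : Type*} [Lattice L] {a b : L}
    {G : Set L} (hG : IsUpperSet G) :
    Set.Ici a ∩ G ⊆ Set.Ici b ↔ G ⊆ {x : L | b ≤ x ⊔ a} := by
  constructor
  · intro h g hg
    exact h ⟨le_sup_right, hG le_sup_left hg⟩
  · rintro h x ⟨hax, hx⟩
    simpa [sup_of_le_left hax] using h hx

/-- In the frame of filters of a frame `L` (ordered by inclusion, with meet given by
intersection), the Heyting implication of principal filters satisfies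
`↑a → ↑b = {x | b ≤ x ⊔ a}`: this set is a filter and it is the largest filter `G`
with `↑a ∩ G ⊆ ↑b`. -/
theorem stmt0 {L : Type*} [Order.Frame L] (a b : L) :
    IsFrameFilter {x : L | b ≤ x ⊔ a} ∧
    ∀ G : Set L, IsFrameFilter G →
      (Set.Ici a ∩ G ⊆ Set.Ici b ↔ G ⊆ {x : L | b ≤ x ⊔ a}) :=
  ⟨isFrameFilter_setOf_le_sup a b,
    fun _ hG => Set.Ici_inter_subset_Ici_iff_subset_setOf_le_sup hG.isUpperSet⟩
end

section
/- In a frame L, for any element a, the pseudocomplement of the principal filter ↑a in the frame of filters is {x ∈ L : x ∨ a = 1}. -/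
theorem isFrameFilter_setOf_sup_eq_top {L : Type*} [Order.Frame L] (a : L) :
    IsFrameFilter {x : L | x ⊔ a = ⊤} := by
  refine ⟨top_sup_eq a, fun x (hx : x ⊔ a = ⊤) y hxy => ?_,
    fun x (hx : x ⊔ a = ⊤) y (hy : y ⊔ a = ⊤) => ?_⟩
  · exact top_unique (hx ▸ sup_le_sup_right hxy a)
  · change x ⊓ y ⊔ a = ⊤
    rw [sup_inf_right, hx, hy, inf_top_eq]

theorem Ici_inter_subset_top_iff {L : Type*} [Lattice L] [OrderTop L] {G : Set L}
    (hG : IsUpperSet G) (a : L) : Set.Ici a ∩ G ⊆ {⊤} ↔ G ⊆ {x : L | x ⊔ a = ⊤} := by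
  constructor
  · intro h x hx
    exact h ⟨le_sup_right, hG le_sup_left hx⟩
  · rintro h z ⟨haz, hz⟩
    have hza : z ⊔ a = ⊤ := h hz
    rwa [sup_eq_left.mpr haz] at hza

/-- In the frame of filters of a frame `L`, the pseudocomplement of the principal
filter `↑a` is `{x | x ⊔ a = ⊤}`: this set is a filter and it is the largest filter `G`
with `↑a ∩ G ⊆ {⊤}` (the bottom filter). -/
theorem stmt1 {L : Type*} [Order.Frame L] (a : L) :
    IsFrameFilter {x : L | x ⊔ a = ⊤} ∧
    ∀ G : Set L, IsFrameFilter G →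
      (Set.Ici a ∩ G ⊆ {(⊤ : L)} ↔ G ⊆ {x : L | x ⊔ a = ⊤}) :=
  ⟨isFrameFilter_setOf_sup_eq_top a, fun _ hG => Ici_inter_subset_top_iff hG.isUpperSet a⟩
end

section
/- In a frame L, for every element a, the meet ⋀{x ∈ L : a < x} is exact, i.e., for every b ∈ L, ⋀{x ∨ b : a < x} = (⋀{x : a < x}) ∨ b. -/
/-! The inequality `≥` holds for every meet. For `≤`: if `b ≤ a`, joining with `b` fixes every
`x > a`. Otherwise `a ⊔ b` itself lies strictly above `a` and is fixed by joining with `b`, so the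
meet of the joins is at most `a ⊔ b ≤ ⋀{x | a < x} ⊔ b`. -/

open Set

section CompleteLattice

variable {α : Type*} [CompleteLattice α]

theorem sInf_image_sup_Ioi_le (a b : α) : sInf ((· ⊔ b) '' Ioi a) ≤ sInf (Ioi a) ⊔ b := by
  by_cases hba : b ≤ a
  · have hfix : ∀ x ∈ Ioi a, x ⊔ b = x := fun x hx => sup_eq_left.2 (hba.trans (le_of_lt hx))
    calc sInf ((· ⊔ b) '' Ioi a) ≤ sInf (Ioi a) :=
          le_sInf fun x hx => sInf_le ⟨x, hx, hfix x hx⟩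
      _ ≤ sInf (Ioi a) ⊔ b := le_sup_left
  · have hab : a ⊔ b ∈ Ioi a := left_lt_sup.2 hba
    calc sInf ((· ⊔ b) '' Ioi a) ≤ a ⊔ b ⊔ b := sInf_le ⟨a ⊔ b, hab, rfl⟩
      _ = a ⊔ b := by rw [sup_assoc, sup_idem]
      _ ≤ sInf (Ioi a) ⊔ b := sup_le_sup_right (le_sInf fun _ => le_of_lt) b

theorem sInf_image_sup_Ioi (a b : α) : sInf ((· ⊔ b) '' Ioi a) = sInf (Ioi a) ⊔ b :=
  le_antisymm (sInf_image_sup_Ioi_le a b) (by rw [sInf_image]; exact sInf_sup_le_iInf_sup)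

end CompleteLattice

/-- In a frame `L`, for every `a`, the meet `⋀{x | a < x}` is exact: for all `b`,
`⋀{x ⊔ b | a < x} = (⋀{x | a < x}) ⊔ b`. -/
theorem stmt2 {L : Type*} [Order.Frame L] (a b : L) :
    sInf ((· ⊔ b) '' {x : L | a < x}) = sInf {x : L | a < x} ⊔ b :=
  sInf_image_sup_Ioi a b
end

section
/- In a frame L, a completely prime filter L \ ↓p (for p a prime element) is an exact filter if and only if p is a covered prime, i.e., whenever ⋀ᵢ xᵢ = p for a family xᵢ, then xᵢ = p for some i. -/
/-!
If `p` is covered, the filter `L ∖ ↓p` is exact: were an exact meet `⋀ S` of elements `≰ p`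
itself `≤ p`, then `⋀ (x ⊔ p) = ⋀ S ⊔ p = p`, so some `x ⊔ p = p`, i.e. `x ≤ p`.
Conversely, if `⋀ S = p` with `p ∉ S`, then `S ⊆ (p, ⊤]`, so `⋀ (p, ⊤] = p`; this meet is
exact because `(p, ⊤]` contains `p ⊔ b` whenever `b ≰ p`, yet `p` lies outside the filter.
-/

/-- A meet (of the set `S`) is exact if it distributes over all joins. -/
def IsExactMeet {L : Type*} [Order.Frame L] (S : Set L) : Prop :=
  ∀ b : L, sInf ((· ⊔ b) '' S) = sInf S ⊔ b

/-- An exact filter: a filter closed under exact meets. -/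
def IsExactFilter {L : Type*} [Order.Frame L] (F : Set L) : Prop :=
  IsFrameFilter F ∧ ∀ S : Set L, S ⊆ F → IsExactMeet S → sInf S ∈ F

theorem sInf_Ioi_eq_of_sInf_eq_of_notMem {L : Type*} [CompleteLattice L] {S : Set L} {a : L}
    (hS : sInf S = a) (ha : a ∉ S) : sInf (Set.Ioi a) = a := by
  refine le_antisymm ?_ (le_sInf fun _ hy => hy.le)
  subst hS
  exact sInf_le_sInf fun x hx => lt_of_le_of_ne (sInf_le hx) fun h => ha (h ▸ hx)

theorem isExactMeet_Ioi {L : Type*} [Order.Frame L] {a : L} (ha : sInf (Set.Ioi a) = a) :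
    IsExactMeet (Set.Ioi a) := by
  intro b
  rw [ha]
  refine le_antisymm ?_ (le_sInf ?_)
  · by_cases hb : b ≤ a
    · calc sInf ((· ⊔ b) '' Set.Ioi a) ≤ sInf (Set.Ioi a) :=
            sInf_le_sInf fun y hy => ⟨y, hy, sup_eq_left.2 (hb.trans hy.le)⟩
        _ ≤ a ⊔ b := ha.le.trans le_sup_left
    · have hab : a ⊔ b ∈ Set.Ioi a := left_lt_sup.2 hb
      simpa [sup_assoc] using sInf_le (Set.mem_image_of_mem (· ⊔ b) hab)
  · rintro _ ⟨y, hy, rfl⟩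
    exact sup_le_sup_right hy.le b

theorem isFrameFilter_setOf_not_le {L : Type*} [Order.Frame L] {p : L}
    (hp : ∀ x y : L, x ⊓ y ≤ p → x ≤ p ∨ y ≤ p) (hp_top : p ≠ ⊤) :
    IsFrameFilter {x : L | ¬ x ≤ p} := by
  refine ⟨fun h => hp_top (top_le_iff.1 h), fun x hx y hxy hy => hx (hxy.trans hy), ?_⟩
  intro x hx y hy hxy
  exact (hp x y hxy).elim hx hy

theorem exists_le_of_isExactMeet_of_sInf_le {L : Type*} [Order.Frame L] {p : L}
    (hcov : ∀ S : Set L, sInf S = p → p ∈ S) {S : Set L} (hS : IsExactMeet S)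
    (hle : sInf S ≤ p) : ∃ x ∈ S, x ≤ p := by
  obtain ⟨x, hx, hxp⟩ := hcov _ (by rw [hS p, sup_eq_right.2 hle])
  exact ⟨x, hx, sup_eq_right.1 hxp⟩

/-- For a prime `p` of a frame `L`, the completely prime filter `L ∖ ↓p` is exact
iff `p` is covered: whenever `⋀ S = p`, some element of `S` equals `p`. -/
theorem stmt3 {L : Type*} [Order.Frame L] (p : L)
    (hp : ∀ x y : L, x ⊓ y ≤ p → x ≤ p ∨ y ≤ p) :
    IsExactFilter {x : L | ¬ x ≤ p} ↔ ∀ S : Set L, sInf S = p → p ∈ S := by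
  constructor
  · rintro ⟨-, hexact⟩ S hS
    by_contra hpS
    have hIoi := sInf_Ioi_eq_of_sInf_eq_of_notMem hS hpS
    exact hexact _ (fun _ hy => hy.not_ge) (isExactMeet_Ioi hIoi) hIoi.le
  · intro hcov
    have hp_top : p ≠ ⊤ := fun h => (hcov ∅ (sInf_empty.trans h.symm)).elim
    refine ⟨isFrameFilter_setOf_not_le hp hp_top, fun S hSF hS hle => ?_⟩
    obtain ⟨x, hx, hxp⟩ := exists_le_of_isExactMeet_of_sInf_le hcov hS hle
    exact hSF hx hxp
end

section
/- A T₀ space X is T₁ if and only if every neighborhood filter N(x) = {U open : x ∈ U} is a regular filter of the frame of open sets, i.e., N(x) = {U : U ∪ V = X} for some open V. -/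
/-!
Since `U ⊔ V = ⊤` means `Vᶜ ⊆ U`, the neighborhood filter of `x` is regular exactly when the
open neighborhoods of `x` are the opens containing some closed set containing `x`. This forces
every open neighborhood of `x` to contain `closure {x}`, so specialization is symmetric (the
space is R₀); conversely in an R₀ space `V = (closure {x})ᶜ` works. Finally T₁ = T₀ + R₀.
-/

open TopologicalSpace

namespace TopologicalSpace.Opens

variable {X : Type*} [TopologicalSpace X]

theorem sup_eq_top_iff_compl_subset {U V : Opens X} : U ⊔ V = ⊤ ↔ (V : Set X)ᶜ ⊆ U := by
  rw [← SetLike.coe_set_eq, coe_sup, coe_top, Set.compl_subset_iff_union, Set.union_comm]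

end TopologicalSpace.Opens

theorem r0Space_iff_forall_exists_setOf_mem_eq_setOf_sup_eq_top {X : Type*}
    [TopologicalSpace X] :
    R0Space X ↔
      ∀ x : X, ∃ V : Opens X, {U : Opens X | x ∈ U} = {U : Opens X | U ⊔ V = ⊤} := by
  constructor
  · intro _ x
    refine ⟨⟨(closure {x})ᶜ, isClosed_closure.isOpen_compl⟩, Set.ext fun U => ?_⟩
    simp only [Set.mem_ofPred_eq, Opens.sup_eq_top_iff_compl_subset, Opens.coe_mk, compl_compl]
    exact ⟨fun hx _ hy => (specializes_iff_mem_closure.2 hy).symm.mem_open U.isOpen hx,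
      fun h => h (subset_closure rfl)⟩
  · refine fun h => ⟨⟨fun x y hxy => ?_⟩⟩
    obtain ⟨V, hV⟩ := h x
    have hN (U : Opens X) : x ∈ U ↔ (V : Set X)ᶜ ⊆ U := by
      simpa [Opens.sup_eq_top_iff_compl_subset] using Set.ext_iff.1 hV U
    have hxV : x ∉ V := fun hx =>
      (hN ⊥).2 fun _ hz => (hz <| (hN V).1 hx hz).elim
    have hyV : y ∉ V := fun hy => hxV (hxy.mem_open V.isOpen hy)
    exact specializes_iff_forall_open.2 fun s hs hx => (hN ⟨s, hs⟩).1 hx hyV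

/-- A T₀ space `X` is T₁ iff every neighborhood filter `N(x) = {U open | x ∈ U}` is a
regular filter of the frame of opens, i.e. `N(x) = {U | U ∪ V = X}` for some open `V`. -/
theorem stmt8 {X : Type*} [TopologicalSpace X] [T0Space X] :
    T1Space X ↔
      ∀ x : X, ∃ V : Opens X,
        {U : Opens X | x ∈ U} = {U : Opens X | U ⊔ V = ⊤} := by
  rw [t1Space_iff_t0Space_and_r0Space, r0Space_iff_forall_exists_setOf_mem_eq_setOf_sup_eq_top]
  exact and_iff_right ‹T0Space X›
end

section
/- If f : L → M is a surjective frame homomorphism that maps every exact meet to the meet of the images (i.e., f(⋀ᵢ xᵢ) = ⋀ᵢ f(xᵢ) whenever ⋀ᵢ xᵢ is exact), then f is exact: for every exact meet ⋀ᵢ xᵢ in L, the meet ⋀ᵢ f(xᵢ) is exact in M. -/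
theorem IsExactMeet.image_sup_right {L : Type*} [Order.Frame L] {S : Set L}
    (hS : IsExactMeet S) (a : L) : IsExactMeet ((· ⊔ a) '' S) := by
  intro y
  simp only [Set.image_image, sup_assoc]
  rw [hS (a ⊔ y), hS a, sup_assoc]

theorem FrameHom.image_image_sup_right {L M : Type*} [Order.Frame L] [Order.Frame M]
    (f : FrameHom L M) (S : Set L) (a : L) :
    f '' ((· ⊔ a) '' S) = (· ⊔ f a) '' (f '' S) := by
  simp only [Set.image_image, map_sup]

/-- A surjective frame homomorphism preserving exact meets is exact: the image of every
exact meet is an exact meet. -/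
theorem stmt10 {L M : Type*} [Order.Frame L] [Order.Frame M] (f : FrameHom L M)
    (hsurj : Function.Surjective f)
    (hpres : ∀ S : Set L, IsExactMeet S → f (sInf S) = sInf (f '' S)) :
    ∀ S : Set L, IsExactMeet S → IsExactMeet (f '' S) := by
  intro S hS b
  obtain ⟨a, rfl⟩ := hsurj b
  calc sInf ((· ⊔ f a) '' (f '' S))
      = sInf (f '' ((· ⊔ a) '' S)) := by rw [f.image_image_sup_right]
    _ = f (sInf ((· ⊔ a) '' S)) := (hpres _ (hS.image_sup_right a)).symm
    _ = f (sInf S ⊔ a) := by rw [hS a]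
    _ = sInf (f '' S) ⊔ f a := by rw [map_sup, hpres S hS]
end

section
/- A frame homomorphism f : L → M is exact (it sends every exact meet to an exact meet and preserves it) if and only if the preimage f⁻¹(G) of every exact filter G of M is an exact filter of L. -/
/-!
An exact homomorphism pulls exact filters back to exact filters because it carries the
exact meet of `S ⊆ f⁻¹ G` to an exact meet of `f '' S ⊆ G` with the same value.
Conversely, for `b : M` and `c = ⋀ {f s ⊔ b | s ∈ S}`, the set `{m | c ≤ m ⊔ b}` is an exact
filter of `M`; its preimage contains `S`, hence the exact meet `⋀ S`, i.e.
`c ≤ f (⋀ S) ⊔ b`. With `b = ⊥` this gives `⋀ f '' S = f (⋀ S)`, and then the inequality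
for every `b` is exactness of `⋀ f '' S`.
-/

section Exact

variable {L M : Type*} [Order.Frame L] [Order.Frame M]

theorem sInf_image_sup_le_iff_isExactMeet {S : Set L} :
    (∀ b, sInf ((· ⊔ b) '' S) ≤ sInf S ⊔ b) ↔ IsExactMeet S := by
  refine ⟨fun h b => le_antisymm (h b) ?_, fun h b => (h b).le⟩
  rw [sInf_image]
  exact sInf_sup_le_iInf_sup

theorem IsFrameFilter.preimage (f : FrameHom L M) {G : Set M} (hG : IsFrameFilter G) :
    IsFrameFilter (f ⁻¹' G) := by
  obtain ⟨htop, hup, hinf⟩ := hG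
  refine ⟨?_, fun x hx y hxy => hup _ hx _ (OrderHomClass.mono f hxy), fun x hx y hy => ?_⟩
  · simpa only [Set.mem_preimage, map_top] using htop
  · simpa only [Set.mem_preimage, map_inf] using hinf _ hx _ hy

theorem IsExactFilter.preimage (f : FrameHom L M)
    (hf : ∀ S : Set L, IsExactMeet S → IsExactMeet (f '' S) ∧ sInf (f '' S) = f (sInf S))
    {G : Set M} (hG : IsExactFilter G) : IsExactFilter (f ⁻¹' G) := by
  refine ⟨hG.1.preimage f, fun S hS hSe => ?_⟩
  obtain ⟨hfSe, hfS⟩ := hf S hSe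
  rw [Set.mem_preimage, ← hfS]
  exact hG.2 _ (Set.image_subset_iff.mpr hS) hfSe

theorem isExactFilter_setOf_le_sup (c b : M) : IsExactFilter {m | c ≤ m ⊔ b} := by
  refine ⟨⟨by simp, fun x hx y hxy => hx.trans (sup_le_sup_right hxy b), fun x hx y hy => ?_⟩,
    fun T hT hTe => ?_⟩
  · simpa only [Set.mem_ofPred_eq, sup_inf_right] using le_inf hx hy
  · rw [Set.mem_ofPred_eq, ← hTe b]
    exact le_sInf (Set.forall_mem_image.mpr hT)

theorem sInf_image_sup_le_map_sInf_sup (f : FrameHom L M)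
    (hf : ∀ G : Set M, IsExactFilter G → IsExactFilter (f ⁻¹' G))
    {S : Set L} (hS : IsExactMeet S) (b : M) :
    sInf ((· ⊔ b) '' (f '' S)) ≤ f (sInf S) ⊔ b := by
  refine (hf _ (isExactFilter_setOf_le_sup _ b)).2 S (fun s hs => ?_) hS
  exact sInf_le ⟨f s, Set.mem_image_of_mem f hs, rfl⟩

theorem sInf_image_eq_map_sInf (f : FrameHom L M)
    (hf : ∀ G : Set M, IsExactFilter G → IsExactFilter (f ⁻¹' G))
    {S : Set L} (hS : IsExactMeet S) : sInf (f '' S) = f (sInf S) := by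
  refine le_antisymm ?_ <| le_sInf <| Set.forall_mem_image.mpr fun s hs =>
    OrderHomClass.mono f (sInf_le hs)
  simpa only [sup_bot_eq, Set.image_id'] using sInf_image_sup_le_map_sInf_sup f hf hS ⊥

end Exact

/-- A frame homomorphism is exact (sends every exact meet to an exact meet and
preserves it) iff preimages of exact filters are exact filters. -/
theorem stmt11 {L M : Type*} [Order.Frame L] [Order.Frame M] (f : FrameHom L M) :
    (∀ S : Set L, IsExactMeet S → IsExactMeet (f '' S) ∧ sInf (f '' S) = f (sInf S)) ↔
    (∀ G : Set M, IsExactFilter G → IsExactFilter (f ⁻¹' G)) := by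
  refine ⟨fun hf G hG => hG.preimage f hf, fun hf S hS => ?_⟩
  have hmap := sInf_image_eq_map_sInf f hf hS
  refine ⟨sInf_image_sup_le_iff_isExactMeet.mp fun b => ?_, hmap⟩
  rw [hmap]
  exact sInf_image_sup_le_map_sInf_sup f hf hS b
end

section
/- In a compact zero-dimensional frame L, a filter is Scott-open if and only if it is a union of a (directed) family of principal filters ↑k with k complemented. -/
/-- A complemented element of a frame. -/
def IsComplementedElem {L : Type*} [Order.Frame L] (k : L) : Prop :=
  ∃ k' : L, k ⊓ k' = ⊥ ∧ k ⊔ k' = ⊤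

/-- A Scott-open subset of a frame: inaccessible by directed joins. -/
def IsScottOpenSet {L : Type*} [Order.Frame L] (F : Set L) : Prop :=
  ∀ D : Set L, D.Nonempty → DirectedOn (· ≤ ·) D → sSup D ∈ F → ∃ d ∈ D, d ∈ F

lemma complemented_sup {L : Type*} [Order.Frame L] {a b : L}
    (ha : IsComplementedElem a) (hb : IsComplementedElem b) :
    IsComplementedElem (a ⊔ b) := by
  obtain ⟨a', ha1, ha2⟩ := ha
  obtain ⟨b', hb1, hb2⟩ := hb
  refine ⟨a' ⊓ b', ?_, ?_⟩
  · have e1 : a ⊓ (a' ⊓ b') = ⊥ := by rw [← inf_assoc, ha1, bot_inf_eq]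
    have e2 : b ⊓ (a' ⊓ b') = ⊥ := by rw [inf_comm a' b', ← inf_assoc, hb1, bot_inf_eq]
    rw [inf_sup_right, e1, e2, sup_idem]
  · rw [sup_inf_left]
    have h1 : a ⊔ b ⊔ a' = ⊤ := by rw [sup_right_comm, ha2]; simp
    have h2 : a ⊔ b ⊔ b' = ⊤ := by rw [sup_assoc, hb2]; simp
    rw [h1, h2]; simp

lemma complemented_finset_sup {L : Type*} [Order.Frame L] (S : Finset L)
    (h : ∀ k ∈ S, IsComplementedElem k) : IsComplementedElem (S.sup id) := by
  classical
  induction S using Finset.induction_on with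
  | empty => exact ⟨⊤, by simp, by simp⟩
  | insert _ _ hx ih =>
    rw [Finset.sup_insert]
    exact complemented_sup (h _ (Finset.mem_insert_self _ _))
      (ih fun k hk => h k (Finset.mem_insert_of_mem hk))

/-- In a compact zero-dimensional frame, a filter is Scott-open iff it is a union of
principal filters of complemented elements. -/
theorem stmt15 {L : Type*} [Order.Frame L]
    (hcomp : IsCompactElement (⊤ : L))
    (hzd : ∀ a : L, ∃ K : Set L, (∀ k ∈ K, IsComplementedElem k) ∧ a = sSup K)
    (F : Set L) (hF : IsFrameFilter F) :
    IsScottOpenSet F ↔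
      ∃ K : Set L, (∀ k ∈ K, IsComplementedElem k) ∧ F = ⋃ k ∈ K, Set.Ici k := by
  obtain ⟨htop, hup, hinf⟩ := hF
  constructor
  · intro hso
    refine ⟨{k ∈ F | IsComplementedElem k}, fun k hk => hk.2, ?_⟩
    ext a
    simp only [Set.mem_iUnion, Set.mem_Ici, Set.mem_setOf_eq]
    constructor
    · intro haF
      classical
      obtain ⟨Ka, hKa, haeq⟩ := hzd a
      set D : Set L := {x | ∃ S : Finset L, ↑S ⊆ Ka ∧ x = S.sup id} with hD
      have hne : D.Nonempty := ⟨⊥, ∅, by simp⟩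
      have hdir : DirectedOn (· ≤ ·) D := by
        rintro x ⟨S, hS, rfl⟩ y ⟨T, hT, rfl⟩
        exact ⟨(S ∪ T).sup id, ⟨S ∪ T, by
          simp only [Finset.coe_union]; exact Set.union_subset hS hT, rfl⟩,
          Finset.sup_mono Finset.subset_union_left,
          Finset.sup_mono Finset.subset_union_right⟩
      have hsup : sSup D = a := by
        apply le_antisymm
        · apply sSup_le
          rintro x ⟨S, hS, rfl⟩
          exact Finset.sup_le fun k hk => haeq ▸ le_sSup (hS hk)
        · rw [haeq]
          exact sSup_le fun k hk => le_sSup ⟨{k}, by simpa using hk, by simp⟩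
      obtain ⟨d, ⟨S, hS, rfl⟩, hdF⟩ := hso D hne hdir (hsup ▸ haF)
      refine ⟨S.sup id, ⟨hdF, complemented_finset_sup S fun k hk => hKa k (hS hk)⟩, ?_⟩
      calc S.sup id ≤ sSup D := le_sSup ⟨S, hS, rfl⟩
        _ = a := hsup
    · rintro ⟨k, ⟨hkF, _⟩, hka⟩
      exact hup k hkF a hka
  · rintro ⟨K, hK, rfl⟩
    intro D hne hdir hmem
    simp only [Set.mem_iUnion, Set.mem_Ici] at hmem ⊢
    obtain ⟨k, hkK, hk⟩ := hmem
    obtain ⟨k', hk1, hk2⟩ := hK k hkK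
    have hdir' : DirectedOn (· ≤ ·) ((k' ⊔ ·) '' D) := by
      rintro x ⟨d1, hd1, rfl⟩ y ⟨d2, hd2, rfl⟩
      obtain ⟨d, hd, h1, h2⟩ := hdir d1 hd1 d2 hd2
      exact ⟨k' ⊔ d, ⟨d, hd, rfl⟩, sup_le_sup_left h1 _, sup_le_sup_left h2 _⟩
    have hle : (⊤ : L) ≤ sSup ((k' ⊔ ·) '' D) := by
      obtain ⟨d0, hd0⟩ := hne
      have : sSup ((k' ⊔ ·) '' D) = k' ⊔ sSup D := by
        apply le_antisymm
        · apply sSup_le; rintro x ⟨d, hd, rfl⟩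
          exact sup_le_sup_left (le_sSup hd) _
        · exact sup_le (le_trans le_sup_left (le_sSup ⟨d0, hd0, rfl⟩))
            (sSup_le fun d hd => le_trans le_sup_right (le_sSup ⟨d, hd, rfl⟩))
      rw [this]
      calc (⊤ : L) = k ⊔ k' := hk2.symm
        _ ≤ sSup D ⊔ k' := sup_le_sup_right hk _
        _ = k' ⊔ sSup D := sup_comm _ _
    obtain ⟨x, ⟨d, hd, rfl⟩, hx⟩ :=
      (CompleteLattice.isCompactElement_iff_le_of_directed_sSup_le L (⊤ : L)).mp hcomp
        ((k' ⊔ ·) '' D) ⟨k' ⊔ hne.choose, ⟨hne.choose, hne.choose_spec, rfl⟩⟩ hdir' hle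
    refine ⟨d, hd, k, hkK, ?_⟩
    have heq : k' ⊔ d = ⊤ := top_le_iff.mp hx
    have : k = k ⊓ (k' ⊔ d) := by rw [heq]; simp
    rw [this, inf_sup_left, hk1]
    simp
end

section
/- In a compact zero-dimensional frame L, every Scott-open filter is a regular filter: for any Scott-open filter F, ¬¬F ⊆ F in the frame of filters. -/
/-- The pseudocomplement of a filter in the frame of filters of `L`. -/
def pcompl {L : Type*} [Order.Frame L] (F : Set L) : Set L :=
  {x : L | ∀ f ∈ F, x ⊔ f = ⊤}

/-- A finite sup of complemented elements is complemented. -/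
lemma finsetSup_complemented {L : Type*} [Order.Frame L] (S : Finset L)
    (h : ∀ a ∈ S, IsComplementedElem a) : IsComplementedElem (S.sup id) := by
  classical
  induction S using Finset.induction_on with
  | empty => exact ⟨⊤, by simp, by simp⟩
  | @insert a S ha ih =>
    obtain ⟨r', hr1, hr2⟩ := ih (fun b hb => h b (Finset.mem_insert_of_mem hb))
    obtain ⟨a', ha1, ha2⟩ := h a (Finset.mem_insert_self a S)
    rw [Finset.sup_insert]
    refine ⟨a' ⊓ r', ?_, ?_⟩
    · rw [inf_sup_right]
      have h1 : (id a : L) ⊓ (a' ⊓ r') ≤ ⊥ := by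
        calc (id a : L) ⊓ (a' ⊓ r') ≤ a ⊓ a' := by
              simp only [id]; exact inf_le_inf_left _ inf_le_left
          _ = ⊥ := ha1
      have h2 : S.sup id ⊓ (a' ⊓ r') ≤ ⊥ := by
        calc S.sup id ⊓ (a' ⊓ r') ≤ S.sup id ⊓ r' := inf_le_inf_left _ inf_le_right
          _ = ⊥ := hr1
      exact le_antisymm (sup_le h1 h2) bot_le
    · rw [sup_inf_left]
      have h1 : (⊤ : L) ≤ (id a ⊔ S.sup id) ⊔ a' := by
        calc (⊤ : L) = a ⊔ a' := ha2.symm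
          _ ≤ (id a ⊔ S.sup id) ⊔ a' := sup_le_sup_right le_sup_left _
      have h2 : (⊤ : L) ≤ (id a ⊔ S.sup id) ⊔ r' := by
        calc (⊤ : L) = S.sup id ⊔ r' := hr2.symm
          _ ≤ (id a ⊔ S.sup id) ⊔ r' := sup_le_sup_right le_sup_right _
      exact le_antisymm le_top (le_inf h1 h2)

/-- In a zero-dimensional frame, every member of a Scott-open filter lies above a
complemented member of the filter. -/
lemma exists_complemented_le {L : Type*} [Order.Frame L]
    (hzd : ∀ a : L, ∃ K : Set L, (∀ k ∈ K, IsComplementedElem k) ∧ a = sSup K)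
    (F : Set L) (hF : IsFrameFilter F) (hso : IsScottOpenSet F)
    {f : L} (hf : f ∈ F) :
    ∃ c : L, IsComplementedElem c ∧ c ∈ F ∧ c ≤ f := by
  classical
  obtain ⟨K, hK, rfl⟩ := hzd f
  set D : Set L := {a | ∃ S : Finset L, ↑S ⊆ K ∧ a = S.sup id} with hD
  have hDne : D.Nonempty := ⟨⊥, ∅, by simp, by simp⟩
  have hDdir : DirectedOn (· ≤ ·) D := by
    rintro _ ⟨S, hS, rfl⟩ _ ⟨T, hT, rfl⟩
    refine ⟨(S ∪ T).sup id, ⟨S ∪ T, ?_, rfl⟩, ?_, ?_⟩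
    · intro a ha
      rcases Finset.mem_union.mp ha with h | h
      · exact hS h
      · exact hT h
    · exact Finset.sup_mono Finset.subset_union_left
    · exact Finset.sup_mono Finset.subset_union_right
  have hsup : sSup D = sSup K := by
    apply le_antisymm
    · apply sSup_le
      rintro _ ⟨S, hS, rfl⟩
      exact Finset.sup_le fun a ha => le_sSup (hS ha)
    · apply sSup_le
      intro k hk
      exact le_trans (by simp) (le_sSup (show ({k} : Finset L).sup id ∈ D from
        ⟨{k}, by simpa using hk, rfl⟩))
  obtain ⟨d, hdD, hdF⟩ := hso D hDne hDdir (by rw [hsup]; exact hf)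
  obtain ⟨S, hS, rfl⟩ := hdD
  exact ⟨S.sup id, finsetSup_complemented S (fun a ha => hK a (hS ha)), hdF,
    Finset.sup_le fun a ha => le_sSup (hS ha)⟩

/-- In a compact zero-dimensional frame, every Scott-open filter is regular:
`¬¬F ⊆ F`. -/
theorem stmt16 {L : Type*} [Order.Frame L]
    (hcomp : IsCompactElement (⊤ : L))
    (hzd : ∀ a : L, ∃ K : Set L, (∀ k ∈ K, IsComplementedElem k) ∧ a = sSup K)
    (F : Set L) (hF : IsFrameFilter F) (hso : IsScottOpenSet F) :
    pcompl (pcompl F) ⊆ F := by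
  classical
  obtain ⟨htop, hup, hmeet⟩ := hF
  intro x hx
  -- Y : complements of complemented members of F
  set Y : Set L := {y | ∃ c ∈ F, c ⊓ y = ⊥ ∧ c ⊔ y = ⊤} with hY
  -- sSup Y ∈ pcompl F
  have hYpc : sSup Y ∈ pcompl F := by
    intro f hf
    obtain ⟨c, ⟨c', hc1, hc2⟩, hcF, hcf⟩ :=
      exists_complemented_le hzd F ⟨htop, hup, hmeet⟩ hso hf
    have hc'Y : c' ∈ Y := ⟨c, hcF, hc1, hc2⟩
    have : (⊤ : L) ≤ sSup Y ⊔ f := by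
      calc (⊤ : L) = c ⊔ c' := hc2.symm
        _ ≤ f ⊔ sSup Y := sup_le_sup hcf (le_sSup hc'Y)
        _ = sSup Y ⊔ f := sup_comm _ _
    exact le_antisymm le_top this
  have hxy : x ⊔ sSup Y = ⊤ := hx _ hYpc
  obtain ⟨K, hK, hxK⟩ := hzd x
  -- apply compactness to K ∪ Y
  have htople : (⊤ : L) ≤ sSup (K ∪ Y) := by
    rw [sSup_union, ← hxK, hxy]
  obtain ⟨T, hT, hTtop⟩ := (CompleteLattice.isCompactElement_iff_exists_le_sSup_of_le_sSup (k := (⊤ : L))).mp hcomp (K ∪ Y) htople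
  -- find c ∈ F killing all Y-elements of T
  have key : ∀ T' : Finset L, ∃ c ∈ F, ∀ t ∈ T', t ∈ Y → c ⊓ t = ⊥ := by
    intro T'
    induction T' using Finset.induction_on with
    | empty => exact ⟨⊤, htop, by simp⟩
    | @insert a T' ha ih =>
      obtain ⟨c, hcF, hc⟩ := ih
      by_cases haY : a ∈ Y
      · obtain ⟨b, hbF, hb1, _⟩ := haY
        refine ⟨c ⊓ b, hmeet c hcF b hbF, ?_⟩
        intro t ht htY
        rcases Finset.mem_insert.mp ht with rfl | ht'
        · exact le_antisymm (le_trans (inf_le_inf_right _ inf_le_right) hb1.le) bot_le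
        · exact le_antisymm
            (le_trans (inf_le_inf_right _ inf_le_left) (hc t ht' htY).le) bot_le
      · refine ⟨c, hcF, ?_⟩
        intro t ht htY
        rcases Finset.mem_insert.mp ht with rfl | ht'
        · exact absurd htY haY
        · exact hc t ht' htY
  obtain ⟨c, hcF, hc⟩ := key T
  -- c ≤ x
  have hcx : c ≤ x := by
    have h1 : c = c ⊓ T.sup id := by
      rw [eq_comm, inf_eq_left]
      exact le_trans le_top hTtop
    have h2 : c ⊓ T.sup id ≤ x := by
      rw [Finset.sup_id_eq_sSup, inf_sSup_eq]
      apply iSup_le; intro t; apply iSup_le; intro ht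
      rcases hT ht with htK | htY
      · calc c ⊓ t ≤ t := inf_le_right
          _ ≤ sSup K := le_sSup htK
          _ = x := hxK.symm
      · rw [hc t ht htY]; exact bot_le
    rw [h1]; exact h2
  exact hup c hcF x hcx
end

section
/- Let C be a coframe and L ⊆ C a subframe that meet-generates C, and let f : C → D be a map to a coframe D that preserves arbitrary meets and preserves all joins of elements of L. Then f preserves finite joins of C, hence is a coframe homomorphism. -/
/-!
Write `c = ⋀ S` and `d = ⋀ T` with `S, T ⊆ L`. Coframe distributivity gives
`c ⊔ d = ⋀ {s ⊔ t | s ∈ S, t ∈ T}`, a meet of binary joins of elements of `L`. The map `f`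
preserves that meet and each of those binary joins, and distributivity in `D` reassembles
`⋀ {f s ⊔ f t}` into `f c ⊔ f d`.
-/

theorem sInf_sup_sInf_eq_sInf_image2 {α : Type*} [Order.Coframe α] (s t : Set α) :
    sInf s ⊔ sInf t = sInf (Set.image2 (· ⊔ ·) s t) := by
  rw [sInf_image2, sInf_sup_sInf, biInf_prod]

theorem map_sup_of_map_sInf_of_map_sup_on_generators {α β : Type*} [Order.Coframe α]
    [Order.Coframe β] {G : Set α} (hG : ∀ c : α, ∃ S : Set α, S ⊆ G ∧ c = sInf S) {f : α → β}
    (hf : ∀ S : Set α, f (sInf S) = sInf (f '' S))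
    (hfG : ∀ a ∈ G, ∀ b ∈ G, f (a ⊔ b) = f a ⊔ f b) (c d : α) :
    f (c ⊔ d) = f c ⊔ f d := by
  obtain ⟨S, hSG, rfl⟩ := hG c
  obtain ⟨T, hTG, rfl⟩ := hG d
  calc f (sInf S ⊔ sInf T)
      = sInf (Set.image2 (fun s t => f (s ⊔ t)) S T) := by
        rw [sInf_sup_sInf_eq_sInf_image2, hf, Set.image_image2]
    _ = sInf (Set.image2 (fun s t => f s ⊔ f t) S T) := by
        rw [Set.image2_congr fun s hs t ht => hfG s (hSG hs) t (hTG ht)]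
    _ = f (sInf S) ⊔ f (sInf T) := by
        rw [hf, hf, sInf_sup_sInf_eq_sInf_image2, Set.image2_image_left, Set.image2_image_right]

theorem map_sup_of_map_sSup_pair {α β : Type*} [CompleteLattice α] [CompleteLattice β]
    {f : α → β} {a b : α} (h : f (sSup {a, b}) = sSup (f '' {a, b})) :
    f (a ⊔ b) = f a ⊔ f b := by
  rwa [sSup_pair, Set.image_pair, sSup_pair] at h

theorem stmt18_general {C D : Type*} [Order.Coframe C] [Order.Coframe D] (L : Set C)
    (hGen : ∀ c : C, ∃ S : Set C, S ⊆ L ∧ c = sInf S)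
    (f : C → D)
    (hMeets : ∀ S : Set C, f (sInf S) = sInf (f '' S))
    (hLJoins : ∀ S : Set C, S ⊆ L → f (sSup S) = sSup (f '' S)) :
    f ⊥ = ⊥ ∧ ∀ c d : C, f (c ⊔ d) = f c ⊔ f d := by
  refine ⟨?_, map_sup_of_map_sInf_of_map_sup_on_generators hGen hMeets fun a ha b hb => ?_⟩
  · simpa using hLJoins ∅ (Set.empty_subset L)
  · exact map_sup_of_map_sSup_pair (hLJoins {a, b} (Set.pair_subset ha hb))

/-- Let `C` be a coframe, `L ⊆ C` a subframe (closed under arbitrary joins and finite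
meets of `C`) that meet-generates `C`, and `f : C → D` a map to a coframe preserving
arbitrary meets and all joins of elements of `L`. Then `f` preserves finite joins,
hence is a coframe homomorphism. -/
theorem stmt18 {C D : Type*} [Order.Coframe C] [Order.Coframe D] (L : Set C)
    (hJoin : ∀ S : Set C, S ⊆ L → sSup S ∈ L)
    (hTop : ⊤ ∈ L) (hInf : ∀ a ∈ L, ∀ b ∈ L, a ⊓ b ∈ L)
    (hGen : ∀ c : C, ∃ S : Set C, S ⊆ L ∧ c = sInf S)
    (f : C → D)
    (hMeets : ∀ S : Set C, f (sInf S) = sInf (f '' S))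
    (hLJoins : ∀ S : Set C, S ⊆ L → f (sSup S) = sSup (f '' S)) :
    f ⊥ = ⊥ ∧ ∀ c d : C, f (c ⊔ d) = f c ⊔ f d :=
  stmt18_general L hGen f hMeets hLJoins
end

section
/- Let L be a frame and S ⊆ L a sublocale, and suppose 𝒮 is a collection of sublocales of L closed under arbitrary joins (in the coframe of sublocales) and stable under the operations T ↦ T ∩ c(x) and T ↦ T ∩ o(x) for all x ∈ L, where c(x) and o(x) are the closed and open sublocales. Then for every S ∈ 𝒮 and every sublocale T of L, the coframe difference S ∖ T belongs to 𝒮. -/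
/-- A sublocale of a frame: a subset closed under all meets and under `x ⇨ -`. -/
def IsSublocale {L : Type*} [Order.Frame L] (S : Set L) : Prop :=
  (∀ T : Set L, T ⊆ S → sInf T ∈ S) ∧ ∀ x : L, ∀ s ∈ S, x ⇨ s ∈ S

/-- The join of a family of sublocales in the coframe of sublocales: the set of all
meets of subsets of the union. -/
def slJoin {L : Type*} [Order.Frame L] (𝒜 : Set (Set L)) : Set L :=
  {a : L | ∃ T : Set L, T ⊆ ⋃₀ 𝒜 ∧ a = sInf T}

/-- The open sublocale `o(a) = {a ⇨ b | b ∈ L}`. -/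
def oSub {L : Type*} [Order.Frame L] (a : L) : Set L :=
  {b : L | ∃ c : L, b = a ⇨ c}

/-- The closed sublocale `c(a) = ↑a`. -/
def cSub {L : Type*} [Order.Frame L] (a : L) : Set L := Set.Ici a

/-- The coframe difference `S ∖ T = ⋂{U sublocale | S ⊆ T ∨ U}`. -/
def slDiff {L : Type*} [Order.Frame L] (S T : Set L) : Set L :=
  ⋂₀ {U : Set L | IsSublocale U ∧ S ⊆ slJoin {T, U}}

/-!
Let `ν x = ⋀ (T ∩ ↑x)` be the nucleus of `T`. Then `S ∖ T` is the join of the sublocales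
`S ∩ c(x) ∩ o(ν x)`, each of which lies in `𝒮`. Every `s ∈ S` splits as `ν s ⊓ (ν s ⇨ s)` with
the first factor in `T` and the second in `S ∩ c(s) ∩ o(ν s)`, so `S` lies in `T` joined with these
pieces. Conversely, if `S ⊆ T ∨ U` and `s = t ⊓ u ∈ S ∩ c(x) ∩ o(ν x)` with `t ∈ T`, `u ∈ U`,
then `ν x ≤ t`, hence `u ≤ ν x ⇨ s = s` and `s = u ∈ U`.
-/

namespace IsSublocale

variable {L : Type*} [Order.Frame L] {S T : Set L}

theorem sInf_mem (hS : IsSublocale S) {Q : Set L} (hQ : Q ⊆ S) : sInf Q ∈ S := hS.1 Q hQ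

theorem himp_mem (hS : IsSublocale S) (x : L) {s : L} (hs : s ∈ S) : x ⇨ s ∈ S := hS.2 x s hs

theorem inter (hS : IsSublocale S) (hT : IsSublocale T) : IsSublocale (S ∩ T) :=
  ⟨fun _ hQ => ⟨hS.sInf_mem fun _ hq => (hQ hq).1, hT.sInf_mem fun _ hq => (hQ hq).2⟩,
    fun x _ hs => ⟨hS.himp_mem x hs.1, hT.himp_mem x hs.2⟩⟩

end IsSublocale

section Sublocales

variable {L : Type*} [Order.Frame L]

theorem himp_sInf_eq (a : L) (Q : Set L) : a ⇨ sInf Q = sInf ((a ⇨ ·) '' Q) := by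
  rw [sInf_image, sInf_eq_iInf]
  simp only [himp_iInf_eq]

theorem isSublocale_cSub (a : L) : IsSublocale (cSub a) :=
  ⟨fun _ hQ => le_sInf hQ, fun _ _ hs => hs.trans le_himp⟩

theorem mem_oSub_iff {a b : L} : b ∈ oSub a ↔ a ⇨ b = b :=
  ⟨by rintro ⟨c, rfl⟩; rw [himp_himp, inf_idem], fun h => ⟨b, h.symm⟩⟩

theorem isSublocale_oSub (a : L) : IsSublocale (oSub a) := by
  refine ⟨fun Q hQ => mem_oSub_iff.2 ?_, fun x _ ⟨c, hc⟩ => ⟨x ⇨ c, by rw [hc, himp_left_comm]⟩⟩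
  rw [himp_sInf_eq, Set.image_congr fun q hq => mem_oSub_iff.1 (hQ hq), Set.image_id']

theorem mem_slJoin_of_mem {𝒜 : Set (Set L)} {a : L} (ha : a ∈ ⋃₀ 𝒜) : a ∈ slJoin 𝒜 :=
  ⟨{a}, Set.singleton_subset_iff.2 ha, sInf_singleton.symm⟩

theorem isSublocale_slJoin {𝒜 : Set (Set L)} (h𝒜 : ∀ A ∈ 𝒜, IsSublocale A) :
    IsSublocale (slJoin 𝒜) := by
  refine ⟨fun T hT => ⟨⋃₀ {Q | Q ⊆ ⋃₀ 𝒜 ∧ sInf Q ∈ T}, ?_, ?_⟩, ?_⟩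
  · rintro a ⟨Q, ⟨hQ, -⟩, haQ⟩
    exact hQ haQ
  · refine le_antisymm (le_sInf ?_) (le_sInf fun t ht => ?_)
    · rintro a ⟨Q, ⟨-, hQT⟩, haQ⟩
      exact (sInf_le hQT).trans (sInf_le haQ)
    · obtain ⟨Q, hQ, rfl⟩ := hT ht
      exact sInf_le_sInf (Set.subset_sUnion_of_mem ⟨hQ, ht⟩)
  · rintro x _ ⟨Q, hQ, rfl⟩
    refine ⟨(x ⇨ ·) '' Q, ?_, himp_sInf_eq x Q⟩
    rintro _ ⟨q, hq, rfl⟩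
    obtain ⟨A, hA, hqA⟩ := hQ hq
    exact ⟨A, hA, (h𝒜 A hA).himp_mem x hqA⟩

theorem slJoin_subset {𝒜 : Set (Set L)} {U : Set L} (hU : IsSublocale U) (h𝒜 : ∀ A ∈ 𝒜, A ⊆ U) :
    slJoin 𝒜 ⊆ U := by
  rintro _ ⟨Q, hQ, rfl⟩
  refine hU.sInf_mem fun q hq => ?_
  obtain ⟨A, hA, hqA⟩ := hQ hq
  exact h𝒜 A hA hqA

theorem mem_slJoin_pair_iff {T U : Set L} (hT : IsSublocale T) (hU : IsSublocale U) {a : L} :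
    a ∈ slJoin {T, U} ↔ ∃ t ∈ T, ∃ u ∈ U, a = t ⊓ u := by
  constructor
  · rintro ⟨Q, hQ, rfl⟩
    have hQTU : Q ⊆ T ∪ U := by simpa only [Set.sUnion_insert, Set.sUnion_singleton] using hQ
    refine ⟨sInf (Q ∩ T), hT.sInf_mem Set.inter_subset_right,
      sInf (Q ∩ U), hU.sInf_mem Set.inter_subset_right, ?_⟩
    rw [← sInf_union, ← Set.inter_union_distrib_left, Set.inter_eq_left.2 hQTU]
  · rintro ⟨t, ht, u, hu, rfl⟩
    refine ⟨{t, u}, ?_, sInf_pair.symm⟩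
    rintro _ (rfl | rfl)
    exacts [⟨T, Or.inl rfl, ht⟩, ⟨U, Or.inr rfl, hu⟩]

def sublocaleNucleus (T : Set L) (x : L) : L := sInf (T ∩ Set.Ici x)

variable {T : Set L}

theorem sublocaleNucleus_mem (hT : IsSublocale T) (x : L) : sublocaleNucleus T x ∈ T :=
  hT.sInf_mem Set.inter_subset_left

theorem le_sublocaleNucleus (x : L) : x ≤ sublocaleNucleus T x :=
  le_sInf fun _ ht => ht.2

theorem sublocaleNucleus_le {x t : L} (ht : t ∈ T) (hxt : x ≤ t) : sublocaleNucleus T x ≤ t :=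
  sInf_le ⟨ht, hxt⟩

def slDiffPieces (S T : Set L) : Set (Set L) :=
  Set.range fun x => S ∩ cSub x ∩ oSub (sublocaleNucleus T x)

theorem isSublocale_slJoin_slDiffPieces {S : Set L} (hS : IsSublocale S) :
    IsSublocale (slJoin (slDiffPieces S T)) :=
  isSublocale_slJoin <| by
    rintro _ ⟨x, rfl⟩
    exact (hS.inter (isSublocale_cSub x)).inter (isSublocale_oSub _)

theorem subset_slJoin_slDiffPieces {S : Set L} (hS : IsSublocale S) (hT : IsSublocale T) :
    S ⊆ slJoin {T, slJoin (slDiffPieces S T)} := by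
  intro s hs
  refine (mem_slJoin_pair_iff hT (isSublocale_slJoin_slDiffPieces hS)).2
    ⟨sublocaleNucleus T s, sublocaleNucleus_mem hT s, sublocaleNucleus T s ⇨ s,
      mem_slJoin_of_mem ⟨_, ⟨s, rfl⟩, ⟨hS.himp_mem _ hs, le_himp⟩, s, rfl⟩, ?_⟩
  rw [inf_himp, inf_eq_right.2 (le_sublocaleNucleus s)]

theorem slDiffPiece_subset {S U : Set L} (hT : IsSublocale T) (hU : IsSublocale U)
    (hSU : S ⊆ slJoin {T, U}) (x : L) : S ∩ cSub x ∩ oSub (sublocaleNucleus T x) ⊆ U := by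
  rintro s ⟨⟨hsS, hxs⟩, hsν⟩
  obtain ⟨t, ht, u, hu, rfl⟩ := (mem_slJoin_pair_iff hT hU).1 (hSU hsS)
  have hνt : sublocaleNucleus T x ≤ t := sublocaleNucleus_le ht (hxs.trans inf_le_left)
  have hus : u ≤ t ⊓ u := by
    rw [← mem_oSub_iff.1 hsν, le_himp_iff, inf_comm t]
    exact inf_le_inf_left u hνt
  rwa [le_antisymm inf_le_right hus]

theorem slDiff_eq_slJoin_slDiffPieces {S : Set L} (hS : IsSublocale S) (hT : IsSublocale T) :
    slDiff S T = slJoin (slDiffPieces S T) := by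
  refine le_antisymm (Set.sInter_subset_of_mem
    ⟨isSublocale_slJoin_slDiffPieces hS, subset_slJoin_slDiffPieces hS hT⟩)
    (Set.subset_sInter fun U ⟨hU, hSU⟩ => slJoin_subset hU ?_)
  rintro _ ⟨x, rfl⟩
  exact slDiffPiece_subset hT hU hSU x

end Sublocales

/-- If `𝒮` is a collection of sublocales closed under arbitrary joins and stable under
intersecting with closed and open sublocales, then `𝒮` is stable under coframe
differences `S ∖ T` for `S ∈ 𝒮` and `T` any sublocale. -/
theorem stmt19 {L : Type*} [Order.Frame L] (𝒮 : Set (Set L))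
    (h𝒮 : ∀ S ∈ 𝒮, IsSublocale S)
    (hJoins : ∀ 𝒜 : Set (Set L), 𝒜 ⊆ 𝒮 → slJoin 𝒜 ∈ 𝒮)
    (hCl : ∀ S ∈ 𝒮, ∀ x : L, S ∩ cSub x ∈ 𝒮)
    (hOp : ∀ S ∈ 𝒮, ∀ x : L, S ∩ oSub x ∈ 𝒮)
    (S : Set L) (hS : S ∈ 𝒮) (T : Set L) (hT : IsSublocale T) :
    slDiff S T ∈ 𝒮 := by
  rw [slDiff_eq_slJoin_slDiffPieces (h𝒮 S hS) hT]
  refine hJoins _ ?_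
  rintro _ ⟨x, rfl⟩
  exact hOp _ (hCl S hS x) _
end
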